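/- arXiv:1702.03530 — 2 statements merged into one kernel-verified Lean document; each statement's English description precedes it below -/
import Mathlib

section
/- TSP implies SMR (from the hierarchy in Theorem 16): If a set C of CI relations on [p] satisfies the TSP assumption with respect to a DAG G, then C satisfies the SMR assumption with respect to G; that is, CI(G) ⊆ C and |G| < |H| for every DAG H on [p] with CI(H) ⊆ C that is not Markov equivalent to G. -/
open scoped Classical

namespace GSP

/-- A DAG on the node set `Fin p`, given by its finite set of arrows,
which must form an acyclic relation. -/
structure DAG (p : ℕ) where
  arrows : Finset (Fin p × Fin p)
  acyclic : ∀ i : Fin p, ¬ Relation.TransGen (fun a b => (a, b) ∈ arrows) i i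

variable {p : ℕ}

namespace DAG

/-- `a → b` is an arrow of `G`. -/
def Arrow (G : DAG p) (a b : Fin p) : Prop := (a, b) ∈ G.arrows

/-- The number of arrows of `G`, denoted `|G|`. -/
def numArrows (G : DAG p) : ℕ := G.arrows.card

/-- The set of parents of a node `j` in `G`. -/
noncomputable def parents (G : DAG p) (j : Fin p) : Finset (Fin p) :=
  Finset.univ.filter fun i => G.Arrow i j

/-- Adjacency: `a` and `b` are joined by an arrow in some direction. -/
def Adj (G : DAG p) (a b : Fin p) : Prop := G.Arrow a b ∨ G.Arrow b a

/-- `b` is a collider between `a` and `c`: both arrows point into `b`. -/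
def Collider (G : DAG p) (a b c : Fin p) : Prop := G.Arrow a b ∧ G.Arrow c b

/-- `d` is a (reflexive) descendant of `a` in `G`. -/
def Desc (G : DAG p) (a d : Fin p) : Prop := Relation.ReflTransGen G.Arrow a d

/-- The list of nodes `l` is a d-connecting walk given `S`: consecutive nodes
are adjacent, every internal collider lies in `S` or has a descendant in `S`,
and no internal non-collider lies in `S`. -/
def DConnWalk (G : DAG p) (S : Finset (Fin p)) (l : List (Fin p)) : Prop :=
  l.Chain' G.Adj ∧
  ∀ (m : ℕ) (_ : 1 ≤ m) (h2 : m + 1 < l.length),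
    (G.Collider (l.get ⟨m - 1, by omega⟩) (l.get ⟨m, by omega⟩) (l.get ⟨m + 1, h2⟩) →
      ∃ d ∈ S, G.Desc (l.get ⟨m, by omega⟩) d) ∧
    (¬ G.Collider (l.get ⟨m - 1, by omega⟩) (l.get ⟨m, by omega⟩) (l.get ⟨m + 1, h2⟩) →
      l.get ⟨m, by omega⟩ ∉ S)

/-- `i` and `j` are d-connected given `S` in `G`. -/
def DConn (G : DAG p) (i j : Fin p) (S : Finset (Fin p)) : Prop :=
  ∃ l : List (Fin p), l.head? = some i ∧ l.getLast? = some j ∧ G.DConnWalk S l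

/-- `i` and `j` are d-separated given `S` in `G`. -/
def DSep (G : DAG p) (i j : Fin p) (S : Finset (Fin p)) : Prop := ¬ G.DConn i j S

end DAG

/-- A conditional independence (CI) relation `i ⊥ j | S` on `[p]`. -/
abbrev CIRel (p : ℕ) := Fin p × Fin p × Finset (Fin p)

/-- The set of CI relations encoded by the d-separations of `G`. -/
def CIof (G : DAG p) : Set (CIRel p) :=
  {t | t.1 ≠ t.2.1 ∧ t.1 ∉ t.2.2 ∧ t.2.1 ∉ t.2.2 ∧ G.DSep t.1 t.2.1 t.2.2}

/-- The symmetric closure of a set of CI relations. -/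
def symClosure (C : Set (CIRel p)) : Set (CIRel p) :=
  {t | t ∈ C ∨ (t.2.1, t.1, t.2.2) ∈ C}

/-- Symmetry of a set of CI relations. -/
def SymmetricCI (C : Set (CIRel p)) : Prop :=
  ∀ i j S, (i, j, S) ∈ C → (j, i, S) ∈ C

/-- A semigraphoid: symmetric and satisfying (SG2). -/
def Semigraphoid (C : Set (CIRel p)) : Prop :=
  SymmetricCI C ∧
  ∀ i j k S, (i, j, S) ∈ C → (i, k, insert j S) ∈ C →
    (i, k, S) ∈ C ∧ (i, j, insert k S) ∈ C

/-- A graphoid: a semigraphoid additionally satisfying intersection (INT). -/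
def Graphoid (C : Set (CIRel p)) : Prop :=
  Semigraphoid C ∧
  ∀ i j k S, (i, j, insert k S) ∈ C → (i, k, insert j S) ∈ C →
    (i, j, S) ∈ C ∧ (i, k, S) ∈ C

/-- Build a DAG from a relation compatible with a numeric ordering. -/
noncomputable def mkDAG (R : Fin p → Fin p → Prop) (f : Fin p → ℕ)
    (hf : ∀ a b, R a b → f a < f b) : DAG p where
  arrows := Finset.univ.filter fun e : Fin p × Fin p => R e.1 e.2
  acyclic := by
    intro i hi
    have key : ∀ a b : Fin p,
        Relation.TransGen (fun a b : Fin p =>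
          (a, b) ∈ Finset.univ.filter fun e : Fin p × Fin p => R e.1 e.2) a b →
        f a < f b := by
      intro a b h
      induction h with
      | single h => exact hf _ _ (by simpa using h)
      | tail _ h ih => exact lt_trans ih (hf _ _ (by simpa using h))
    exact lt_irrefl _ (key i i hi)

/-- The conditioning set `{π_1, …, π_j} \ {π_i, π_j}` (where `b = π_j` is the
later node and `a = π_i` the earlier one) used in the definition of minimal
I-MAPs. -/
noncomputable def condSet (π : Equiv.Perm (Fin p)) (a b : Fin p) : Finset (Fin p) :=
  ((Finset.univ.filter fun k : Fin p => π.symm k ≤ π.symm b).erase a).erase b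

/-- The minimal I-MAP `G_π` of a set `C` of CI relations with respect to the
permutation (ordering) `π`: there is an arrow `π_i → π_j` for positions `i < j`
iff `π_i ⊥ π_j | {π_1, …, π_j} \ {π_i, π_j}` is not in `C`. -/
noncomputable def minimalIMAP (C : Set (CIRel p)) (π : Equiv.Perm (Fin p)) : DAG p :=
  mkDAG (fun a b => π.symm a < π.symm b ∧ (a, b, condSet π a b) ∉ C)
    (fun a => (π.symm a : ℕ)) (fun a b h => by exact_mod_cast h.1)

/-- Markov equivalence of DAGs: equal sets of d-separation statements. -/
def MarkovEquiv (G H : DAG p) : Prop := CIof G = CIof H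

/-- `H` is an independence map of `G`, written `G ≤ H`: `CI(H) ⊆ CI(G)`. -/
def IMapLE (G H : DAG p) : Prop := CIof H ⊆ CIof G

/-- `π` is a linear extension of `G`: every arrow goes from an earlier to a
later element of `π`. -/
def IsLinExt (G : DAG p) (π : Equiv.Perm (Fin p)) : Prop :=
  ∀ a b, G.Arrow a b → π.symm a < π.symm b

/-- `a → b` is a covered arrow of `G`: `pa(a) = pa(b) \ {a}`. -/
def DAG.Covered (G : DAG p) (a b : Fin p) : Prop :=
  G.Arrow a b ∧ G.parents a = (G.parents b).erase a

/-- The minimal I-MAPs `G_σ` and `G_ρ` are connected by a covered arrow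
reversal: `ρ` is a linear extension of the DAG obtained from `G_σ` by
reversing one covered arrow of `G_σ`. -/
def CoveredReversalStep (C : Set (CIRel p)) (σ ρ : Equiv.Perm (Fin p)) : Prop :=
  ∃ a b : Fin p, (minimalIMAP C σ).Covered a b ∧
    ρ.symm b < ρ.symm a ∧
    ∀ x y : Fin p, (minimalIMAP C σ).Arrow x y → (x, y) ≠ (a, b) →
      ρ.symm x < ρ.symm y

/-- A weakly decreasing sequence of covered arrow reversals: a sequence of
minimal I-MAPs in which consecutive members are connected by covered arrow
reversals and the number of arrows never increases. -/
def WeaklyDecreasingSeq (C : Set (CIRel p)) (s : List (Equiv.Perm (Fin p))) : Prop :=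
  s.Chain' fun σ ρ => CoveredReversalStep C σ ρ ∧
    (minimalIMAP C ρ).numArrows ≤ (minimalIMAP C σ).numArrows

/-- Some weakly decreasing sequence of covered arrow reversals starting at
`G_π` reaches a minimal I-MAP with strictly fewer arrows. -/
def EscapesByCoveredReversals (C : Set (CIRel p)) (π : Equiv.Perm (Fin p)) : Prop :=
  ∃ (s : List (Equiv.Perm (Fin p))) (τ : Equiv.Perm (Fin p)),
    s.head? = some π ∧ s.getLast? = some τ ∧ WeaklyDecreasingSeq C s ∧
    (minimalIMAP C τ).numArrows < (minimalIMAP C π).numArrows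

/-- The TSP assumption of `C` with respect to `G`. -/
def TSP (C : Set (CIRel p)) (G : DAG p) : Prop :=
  CIof G ⊆ C ∧
  ∀ π : Equiv.Perm (Fin p), ¬ EscapesByCoveredReversals C π →
    MarkovEquiv (minimalIMAP C π) G

/-- The SMR assumption of `C` with respect to `G`. -/
def SMR (C : Set (CIRel p)) (G : DAG p) : Prop :=
  CIof G ⊆ C ∧
  ∀ H : DAG p, CIof H ⊆ C → ¬ MarkovEquiv H G → G.numArrows < H.numArrows

end GSP

namespace GSP

/-!
Markov equivalent DAGs have the same skeleton: adjacent nodes are d-connected given every set,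
while non-adjacent nodes `a, b`, with `a` before `b` in a linear extension, are d-separated given
the other nodes up to `b`. Hence every DAG Markov equivalent to `G` has `|G|` arrows.

A permutation `π₀` minimising `|G_π|` admits no escaping sequence, so TSP gives `|G_{π₀}| = |G|`.
If `CI(H) ⊆ C` and `π` is a linear extension of `H`, then `G_π ⊆ H`. So `|H| ≤ |G|` would force
`G_π = H` with `π` minimising as well, and TSP would make `H` Markov equivalent to `G`.
-/

variable {p : ℕ}

namespace DAG

variable (G : DAG p)

lemma arrows_injective : Function.Injective (arrows : DAG p → Finset (Fin p × Fin p)) := by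
  rintro ⟨_, _⟩ ⟨_, _⟩ rfl
  rfl

lemma not_arrow_self (a : Fin p) : ¬ G.Arrow a a := fun h => G.acyclic a (.single h)

variable {G} in
lemma Arrow.not_arrow {a b : Fin p} (h : G.Arrow a b) : ¬ G.Arrow b a := fun h' =>
  G.acyclic a ((Relation.TransGen.single h).tail h')

variable {G} in
lemma Adj.ne {a b : Fin p} (h : G.Adj a b) : a ≠ b := by
  rintro rfl
  rcases h with h | h <;> exact G.not_arrow_self a h

lemma card_filter_adj : (Finset.univ.filter fun e : Fin p × Fin p => G.Adj e.1 e.2).card =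
    2 * G.numArrows := by
  have hsplit : (Finset.univ.filter fun e : Fin p × Fin p => G.Adj e.1 e.2) =
      G.arrows ∪ G.arrows.map (Equiv.prodComm _ _).toEmbedding := by
    ext ⟨u, v⟩
    simp [Adj, Arrow]
  have hdisj : Disjoint G.arrows (G.arrows.map (Equiv.prodComm _ _).toEmbedding) := by
    rw [Finset.disjoint_left]
    rintro ⟨u, v⟩ huv hvu
    exact Arrow.not_arrow (G := G) huv (by simpa using hvu : (v, u) ∈ G.arrows)
  rw [hsplit, Finset.card_union_of_disjoint hdisj, Finset.card_map, numArrows, two_mul]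

lemma card_ancestors_lt {a b : Fin p} (h : G.Arrow a b) :
    (Finset.univ.filter fun c => G.Desc c a).card <
      (Finset.univ.filter fun c => G.Desc c b).card := by
  refine Finset.card_lt_card (Finset.ssubset_iff_of_subset ?_ |>.2 ⟨b, ?_, ?_⟩)
  · intro c hc
    exact Finset.mem_filter.2 ⟨Finset.mem_univ c, (Finset.mem_filter.1 hc).2.tail h⟩
  · exact Finset.mem_filter.2 ⟨Finset.mem_univ b, .refl⟩
  · exact fun hba => G.acyclic a (.head' h (Finset.mem_filter.1 hba).2)

/-- Sorting the nodes by their number of ancestors is a topological order. -/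
lemma exists_isLinExt : ∃ π : Equiv.Perm (Fin p), IsLinExt G π := by
  set f : Fin p → ℕ := fun a => (Finset.univ.filter fun c => G.Desc c a).card
  refine ⟨Tuple.sort f, fun a b hab => ?_⟩
  by_contra! hba
  have := Tuple.monotone_sort f hba
  simp only [Function.comp_apply, Equiv.apply_symm_apply] at this
  exact this.not_gt (G.card_ancestors_lt hab)

variable {G} {S : Finset (Fin p)} {l : List (Fin p)}

lemma DConnWalk.adj (hl : G.DConnWalk S l) {i : ℕ} (hi : i + 1 < l.length) :
    G.Adj l[i] l[i + 1] :=
  List.isChain_iff_getElem.1 hl.1 i hi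

lemma DConnWalk.exists_desc_of_collider (hl : G.DConnWalk S l) {i : ℕ} (hi : i + 2 < l.length)
    (hc : G.Collider l[i] l[i + 1] l[i + 2]) : ∃ d ∈ S, G.Desc l[i + 1] d :=
  (hl.2 (i + 1) (by omega) hi).1 (by simpa using hc)

lemma DConnWalk.not_mem_of_not_collider (hl : G.DConnWalk S l) {i : ℕ} (hi : i + 2 < l.length)
    (hc : ¬ G.Collider l[i] l[i + 1] l[i + 2]) : l[i + 1] ∉ S :=
  (hl.2 (i + 1) (by omega) hi).2 (by simpa using hc)

lemma dConn_of_adj {a b : Fin p} (h : G.Adj a b) (S : Finset (Fin p)) : G.DConn a b S :=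
  ⟨[a, b], rfl, rfl, List.IsChain.cons_cons h (.singleton b), fun m _ h2 => by simp at h2; omega⟩

end DAG

lemma mem_condSet {π : Equiv.Perm (Fin p)} {a b k : Fin p} :
    k ∈ condSet π a b ↔ k ≠ b ∧ k ≠ a ∧ π.symm k ≤ π.symm b := by
  simp [condSet]

lemma not_adj_of_mem_CIof {G : DAG p} {a b : Fin p} {S : Finset (Fin p)}
    (h : (a, b, S) ∈ CIof G) : ¬ G.Adj a b := fun hab =>
  h.2.2.2 (DAG.dConn_of_adj hab S)

namespace IsLinExt

variable {G : DAG p} {π : Equiv.Perm (Fin p)}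

lemma le_of_desc (hπ : IsLinExt G π) {a d : Fin p} (h : G.Desc a d) : π.symm a ≤ π.symm d := by
  induction h with
  | refl => exact le_rfl
  | tail _ hstep ih => exact ih.trans (hπ _ _ hstep).le

/-- A node of maximal position on the walk is an endpoint or a collider: any other internal node
has an arrow to a neighbour, which comes later. -/
lemma le_of_mem_dConnWalk (hπ : IsLinExt G π) {S : Finset (Fin p)} {l : List (Fin p)}
    (hl : G.DConnWalk S l) {B : Fin p} (hS : ∀ d ∈ S, π.symm d ≤ B)
    (hhead : ∀ x ∈ l.head?, π.symm x ≤ B) (hlast : ∀ x ∈ l.getLast?, π.symm x ≤ B) :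
    ∀ x ∈ l, π.symm x ≤ B := by
  intro x hx
  obtain ⟨y, hy, hmax⟩ := l.toFinset.exists_max_image π.symm ⟨x, List.mem_toFinset.2 hx⟩
  refine (hmax x (List.mem_toFinset.2 hx)).trans ?_
  obtain ⟨i, hi, rfl⟩ := List.getElem_of_mem (List.mem_toFinset.1 hy)
  have hle : ∀ j (hj : j < l.length), π.symm l[j] ≤ π.symm l[i] := fun j hj =>
    hmax _ (List.mem_toFinset.2 (List.getElem_mem hj))
  rcases i with _ | k
  · exact hhead _ (by simp [List.head?_eq_getElem?, List.getElem?_eq_getElem hi])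
  obtain hk | hk : k + 2 = l.length ∨ k + 2 < l.length := by omega
  · exact hlast _ (by simp [List.getLast?_eq_getElem?, ← hk])
  by_cases hc : G.Collider l[k] l[k + 1] l[k + 2]
  · obtain ⟨d, hdS, hd⟩ := hl.exists_desc_of_collider hk hc
    exact (hπ.le_of_desc hd).trans (hS d hdS)
  exfalso
  rcases hl.adj (i := k) (by omega) with h₁ | h₁
  · rcases hl.adj (i := k + 1) hk with h₂ | h₂
    · exact (hle _ hk).not_gt (hπ _ _ h₂)
    · exact hc ⟨h₁, h₂⟩
  · exact (hle k (by omega)).not_gt (hπ _ _ h₁)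

/-- The ordered Markov property. -/
lemma dSep_condSet (hπ : IsLinExt G π) {a b : Fin p} (hab : π.symm a < π.symm b)
    (hnadj : ¬ G.Adj a b) : G.DSep a b (condSet π a b) := by
  rintro ⟨l, hhead, hlast, hl⟩
  have hle : ∀ x ∈ l, π.symm x ≤ π.symm b :=
    hπ.le_of_mem_dConnWalk hl (fun d hd => (mem_condSet.1 hd).2.2) (by simp [hhead, hab.le])
      (by simp [hlast])
  obtain ⟨n, hn⟩ : ∃ n, l.length = n + 2 := by
    match l, hhead, hlast with
    | [_], rfl, hlast => exact absurd (Option.some.inj hlast) (hab.ne ∘ congrArg π.symm)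
    | _ :: _ :: l, _, _ => exact ⟨l.length, by simp⟩
  have ha : l[0] = a := by simpa [List.head?_eq_getElem?, List.getElem?_eq_getElem, hn] using hhead
  have hb : l[n + 1] = b := by simpa [List.getLast?_eq_getElem?, hn] using hlast
  -- the penultimate node `y` lies in the conditioning set, so it is a collider: `b → y`
  have hyb : G.Adj l[n] b := hb ▸ hl.adj (by omega)
  obtain _ | k := n
  · exact hnadj (ha ▸ hyb)
  have hyS : l[k + 1] ∈ condSet π a b :=
    mem_condSet.2 ⟨hyb.ne, fun h => hnadj (h ▸ hyb), hle _ (List.getElem_mem _)⟩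
  by_cases hc : G.Collider l[k] l[k + 1] l[k + 2]
  · exact (hle _ (List.getElem_mem _)).not_gt (hb ▸ hπ _ _ hc.2)
  · exact hl.not_mem_of_not_collider (by omega) hc hyS

lemma mem_CIof_of_not_adj (hπ : IsLinExt G π) {a b : Fin p} (hab : π.symm a < π.symm b)
    (hnadj : ¬ G.Adj a b) : (a, b, condSet π a b) ∈ CIof G :=
  ⟨fun h => hab.ne (congrArg π.symm h), by simp [mem_condSet], by simp [mem_condSet],
    hπ.dSep_condSet hab hnadj⟩

lemma minimalIMAP_arrows_subset {C : Set (CIRel p)} (hπ : IsLinExt G π) (hC : CIof G ⊆ C) :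
    (minimalIMAP C π).arrows ⊆ G.arrows := by
  rintro ⟨u, v⟩ huv
  simp only [minimalIMAP, mkDAG, Finset.mem_filter, Finset.mem_univ, true_and] at huv
  by_contra hG
  refine huv.2 (hC (hπ.mem_CIof_of_not_adj huv.1 ?_))
  rintro (h | h)
  · exact hG h
  · exact (hπ _ _ h).not_gt huv.1

end IsLinExt

namespace MarkovEquiv

variable {G H : DAG p}

lemma adj (h : MarkovEquiv G H) {a b : Fin p} (hab : G.Adj a b) : H.Adj a b := by
  by_contra hnadj
  obtain ⟨π, hπ⟩ := H.exists_isLinExt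
  rcases (π.symm.injective.ne hab.ne).lt_or_gt with hlt | hlt
  · exact not_adj_of_mem_CIof (h ▸ hπ.mem_CIof_of_not_adj hlt hnadj) hab
  · exact not_adj_of_mem_CIof (h ▸ hπ.mem_CIof_of_not_adj hlt (hnadj ∘ Or.symm)) (Or.symm hab)

lemma numArrows_eq (h : MarkovEquiv G H) : G.numArrows = H.numArrows := by
  have hskel : (Finset.univ.filter fun e : Fin p × Fin p => G.Adj e.1 e.2) =
      Finset.univ.filter fun e : Fin p × Fin p => H.Adj e.1 e.2 :=
    Finset.filter_congr fun _ _ => ⟨h.adj, MarkovEquiv.adj h.symm⟩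
  have := congrArg Finset.card hskel
  rw [G.card_filter_adj, H.card_filter_adj] at this
  omega

end MarkovEquiv

lemma not_escapes_of_forall_le {C : Set (CIRel p)} {π : Equiv.Perm (Fin p)}
    (hmin : ∀ σ, (minimalIMAP C π).numArrows ≤ (minimalIMAP C σ).numArrows) :
    ¬ EscapesByCoveredReversals C π :=
  fun ⟨_, τ, _, _, _, hlt⟩ => (hmin τ).not_gt hlt

/-- from the hierarchy in Theorem 16: the TSP assumption
implies the SMR assumption: if `C` satisfies TSP w.r.t. a DAG `G`, then
`CI(G) ⊆ C` and `|G| < |H|` for every DAG `H` with `CI(H) ⊆ C` that is not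
Markov equivalent to `G`. -/
theorem tsp_implies_smr
    (p : ℕ) (C : Set (CIRel p)) (G : DAG p) (h : TSP C G) :
    SMR C G := by
  obtain ⟨hCG, htsp⟩ := h
  refine ⟨hCG, fun H hCH hHG => ?_⟩
  obtain ⟨π₀, hπ₀⟩ := Finite.exists_min fun σ => (minimalIMAP C σ).numArrows
  have hG : (minimalIMAP C π₀).numArrows = G.numArrows :=
    (htsp π₀ (not_escapes_of_forall_le hπ₀)).numArrows_eq
  obtain ⟨π, hπ⟩ := H.exists_isLinExt
  have hsub := hπ.minimalIMAP_arrows_subset hCH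
  by_contra! hHle
  have hHmin : ∀ σ, H.numArrows ≤ (minimalIMAP C σ).numArrows := fun σ =>
    hHle.trans (hG ▸ hπ₀ σ)
  have hGπ : minimalIMAP C π = H :=
    DAG.arrows_injective (Finset.eq_of_subset_of_card_le hsub (hHmin π))
  have hπmin : ∀ σ, (minimalIMAP C π).numArrows ≤ (minimalIMAP C σ).numArrows := hGπ ▸ hHmin
  exact hHG (hGπ ▸ htsp π (not_escapes_of_forall_le hπmin))

end GSP
end

section
/- D-separation along a linear extension (claim proved inside Lemma 31): Let G be a DAG on [p] and let π be a linear extension of G, written as a concatenation π = S x T y R, where x and y are single nodes and S, T, R are (possibly empty) sequences of nodes. If x and y are not adjacent in G, then x and y are d-separated given S ∪ T in G. -/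
open scoped Classical

/-
Reverse a d-connecting walk so that it runs from `y` to `x` and look at its first edge. If it is
`y ← v`, then `v ≠ x` precedes `y`, so `v` is a non-collider lying in the conditioning set. If it is
`y → v`, follow the walk as long as its edges point away from `y`: either it reaches `x`, which makes
`x` a descendant of `y`, or it stops at a collider, whose descendant in the conditioning set is then
a descendant of `y`. Both contradict the fact that descendants of `y` come after `y` in `π`.
-/

namespace GSP

variable {p : ℕ}

namespace DAG

variable {G : DAG p} {S : Finset (Fin p)}

theorem dConnWalk_cons_cons_cons {a b c : Fin p} {l : List (Fin p)} :
    G.DConnWalk S (a :: b :: c :: l) ↔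
      G.Adj a b ∧ (G.Collider a b c → ∃ d ∈ S, G.Desc b d) ∧
        (¬ G.Collider a b c → b ∉ S) ∧ G.DConnWalk S (b :: c :: l) := by
  constructor
  · rintro ⟨hchain, h⟩
    obtain ⟨hab, hchain⟩ := List.isChain_cons_cons.mp hchain
    refine ⟨hab, (h 1 le_rfl (by simp)).1, (h 1 le_rfl (by simp)).2, hchain, fun m hm hlen => ?_⟩
    obtain ⟨m, rfl⟩ := Nat.exists_eq_add_of_le' hm
    simpa using h (m + 2) (by omega) (by simpa using hlen)
  · rintro ⟨hab, hcol, hncol, hchain, h⟩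
    refine ⟨List.isChain_cons_cons.mpr ⟨hab, hchain⟩, fun m hm hlen => ?_⟩
    rcases m with _ | _ | m
    · omega
    · exact ⟨hcol, hncol⟩
    · simpa using h (m + 1) (by omega) (by simpa using hlen)

theorem collider_comm {a b c : Fin p} : G.Collider a b c ↔ G.Collider c b a :=
  and_comm

theorem DConnWalk.reverse {l : List (Fin p)} (h : G.DConnWalk S l) :
    G.DConnWalk S l.reverse := by
  obtain ⟨hchain, hcond⟩ := h
  refine ⟨List.isChain_reverse.mpr (hchain.imp fun _ _ hab => hab.symm), fun m hm hlen => ?_⟩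
  simp only [List.length_reverse] at hlen
  have := hcond (l.length - 1 - m) (by omega) (by omega)
  have hprev : l.length - 1 - (m - 1) = l.length - 1 - m + 1 := by omega
  have hnext : l.length - 1 - (m + 1) = l.length - 1 - m - 1 := by omega
  simp only [List.get_eq_getElem, List.getElem_reverse, hprev, hnext] at this ⊢
  rwa [collider_comm]

theorem DConn.symm {i j : Fin p} (h : G.DConn i j S) : G.DConn j i S := by
  obtain ⟨l, hi, hj, hw⟩ := h
  exact ⟨l.reverse, by simpa using hj, by simpa using hi, hw.reverse⟩

theorem DConnWalk.exists_mem_desc_or_desc_getLast {u v : Fin p} {l : List (Fin p)}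
    (hw : G.DConnWalk S (u :: v :: l)) (huv : G.Arrow u v) :
    (∃ d ∈ S, G.Desc u d) ∨ G.Desc u ((v :: l).getLast (List.cons_ne_nil v l)) := by
  induction l generalizing u v with
  | nil => exact .inr (.single huv)
  | cons c l ih =>
    obtain ⟨-, hcol, -, hw'⟩ := dConnWalk_cons_cons_cons.mp hw
    by_cases hcv : G.Arrow c v
    · obtain ⟨d, hd, hvd⟩ := hcol ⟨huv, hcv⟩
      exact .inl ⟨d, hd, .head huv hvd⟩
    · have hvc : G.Arrow v c := (List.isChain_cons_cons.mp hw'.1).1.resolve_right hcv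
      rcases ih hw' hvc with ⟨d, hd, hvd⟩ | hvl
      · exact .inl ⟨d, hd, .head huv hvd⟩
      · rw [List.getLast_cons (List.cons_ne_nil c l)]
        exact .inr (hvl.head huv)

end DAG

theorem IsLinExt.le_of_desc_s15 {G : DAG p} {π : Equiv.Perm (Fin p)} (hlin : IsLinExt G π)
    {a b : Fin p} (h : G.Desc a b) : π.symm a ≤ π.symm b := by
  induction h with
  | refl => exact le_rfl
  | tail _ hbc ih => exact ih.trans (hlin _ _ hbc).le

/-- claim proved inside Lemma 31: let `π` be a linear
extension of a DAG `G`, written `π = S x T y R` (so `x` occurs before `y`).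
If `x` and `y` are not adjacent in `G`, then `x` and `y` are d-separated
given `S ∪ T`, which is the set of all nodes occurring strictly before `y`
in `π` other than `x`. -/
theorem dsep_of_nonadjacent_along_linear_extension
    (p : ℕ) (G : DAG p) (π : Equiv.Perm (Fin p)) (hlin : IsLinExt G π)
    (x y : Fin p) (hxy : π.symm x < π.symm y)
    (hnadj : ¬ G.Adj x y) :
    G.DSep x y
      ((Finset.univ.filter fun a : Fin p => π.symm a < π.symm y).erase x) := by
  intro hconn
  obtain ⟨l, hy, hx, hw⟩ := hconn.symm
  rcases l with _ | ⟨y', _ | ⟨v, rest⟩⟩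
  · simp at hy
  · simp only [List.head?_cons, List.getLast?_singleton, Option.some.injEq] at hy hx
    exact hxy.ne (congrArg π.symm (hx.symm.trans hy))
  have hy' : y' = y := by simpa using hy
  subst y'
  rcases (List.isChain_cons_cons.mp hw.1).1 with hyv | hvy
  · rcases hw.exists_mem_desc_or_desc_getLast hyv with ⟨d, hd, hyd⟩ | hyx
    · exact (hlin.le_of_desc_s15 hyd).not_gt (Finset.mem_filter.mp (Finset.mem_of_mem_erase hd)).2
    · simp only [List.getLast?_eq_some_getLast (List.cons_ne_nil _ _), Option.some.injEq] at hx
      exact (hlin.le_of_desc_s15 (hx ▸ hyx)).not_gt hxy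
  · have hvx : v ≠ x := by rintro rfl; exact hnadj (.inl hvy)
    have hvS : v ∈ (Finset.univ.filter fun a : Fin p => π.symm a < π.symm y).erase x := by
      simpa [hvx] using hlin _ _ hvy
    rcases rest with _ | ⟨c, rest⟩
    · exact hvx (by simpa using hx)
    · refine (DAG.dConnWalk_cons_cons_cons.mp hw).2.2.1 ?_ hvS
      exact fun hcol => (hlin _ _ hvy).not_gt (hlin _ _ hcol.1)
end GSP
end
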